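/- Let S ≥ 1 and k ≥ 0 be integers and let x ∈ [0,1] be a real number. Then the (k+1)×(k+1) Hankel matrix with (i,j)-entry x^{i+j}·(i+j)!/(S+i+j)! − x^{i+j+1}·(i+j+1)!/(S+i+j+1)!, for 0 ≤ i,j ≤ k, is positive semidefinite; that is, Σ_{i,j=0}^{k} p_i p_j [ x^{i+j}(i+j)!/(S+i+j)! − x^{i+j+1}(i+j+1)!/(S+i+j+1)! ] ≥ 0 for every p ∈ ℝ^{k+1}. -/

import Mathlib

/-!
Writing `S = s + 1`, the Beta integral `∫₀¹ tⁿ (1 - t)ˢ dt = n! s! / (n + s + 1)!` turns the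
`(i, j)` entry into `∫₀¹ (x t)^(i+j) w(t) dt` with weight `w(t) = (1 - x t)(1 - t)ˢ / s!`, which is
nonnegative on `[0, 1]` because `x ≤ 1`. The quadratic form of the matrix is then
`∫₀¹ (∑ pᵢ (x t)ⁱ)² w(t) dt ≥ 0`.
-/

open Nat MeasureTheory Matrix

theorem integral_pow_mul_one_sub_pow (m n : ℕ) :
    ∫ t in (0 : ℝ)..1, t ^ m * (1 - t) ^ n = (m ! * n ! / (m + n + 1)! : ℝ) := by
  have h := Complex.betaIntegral_eq_Gamma_mul_div (m + 1) (n + 1)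
    (by norm_cast; omega) (by norm_cast; omega)
  rw [show (m + 1 + (n + 1) : ℂ) = ((m + n + 1 : ℕ) : ℂ) + 1 by push_cast; ring,
    Complex.Gamma_nat_eq_factorial, Complex.Gamma_nat_eq_factorial,
    Complex.Gamma_nat_eq_factorial, Complex.betaIntegral] at h
  simp only [add_sub_cancel_right, Complex.cpow_natCast] at h
  apply Complex.ofReal_injective
  push_cast [← intervalIntegral.integral_ofReal]
  exact h

theorem integral_mul_pow_mul_one_sub_mul_mul_one_sub_pow (s n : ℕ) (x : ℝ) :
    ∫ t in (0 : ℝ)..1, (x * t) ^ n * ((1 - x * t) * (1 - t) ^ s / s !) =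
      x ^ n * (n ! / (s + 1 + n)! : ℝ) - x ^ (n + 1) * ((n + 1)! / (s + 1 + n + 1)! : ℝ) := by
  have hint (m : ℕ) : IntervalIntegrable (fun t : ℝ => t ^ m * (1 - t) ^ s) volume 0 1 :=
    (by fun_prop : Continuous fun t : ℝ => t ^ m * (1 - t) ^ s).intervalIntegrable 0 1
  have hsplit : (fun t : ℝ => (x * t) ^ n * ((1 - x * t) * (1 - t) ^ s / s !)) = fun t =>
      x ^ n / s ! * (t ^ n * (1 - t) ^ s) - x ^ (n + 1) / s ! * (t ^ (n + 1) * (1 - t) ^ s) := by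
    ext t; ring
  rw [hsplit, intervalIntegral.integral_sub ((hint n).const_mul _) ((hint (n + 1)).const_mul _),
    intervalIntegral.integral_const_mul, intervalIntegral.integral_const_mul,
    integral_pow_mul_one_sub_pow, integral_pow_mul_one_sub_pow,
    show n + s + 1 = s + 1 + n by ring, show n + 1 + s + 1 = s + 1 + n + 1 by ring]
  field_simp

theorem Matrix.posSemidef_of_integral_mul_mul {α ι : Type*} [MeasurableSpace α] [Fintype ι]
    {μ : Measure α} {u : ι → α → ℝ} {w : α → ℝ} (hw : 0 ≤ᵐ[μ] w)
    (hint : ∀ i j, Integrable (fun t => u i t * u j t * w t) μ) :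
    (Matrix.of fun i j => ∫ t, u i t * u j t * w t ∂μ).PosSemidef := by
  rw [Matrix.posSemidef_iff_dotProduct_mulVec]
  refine ⟨?_, fun p => ?_⟩
  · ext i j
    simp only [conjTranspose_apply, of_apply, star_trivial, mul_comm (u j _)]
  · calc 0 ≤ ∫ t, (∑ i, p i * u i t) ^ 2 * w t ∂μ :=
          integral_nonneg_of_ae (hw.mono fun t ht => mul_nonneg (sq_nonneg _) ht)
      _ = ∫ t, ∑ i, ∑ j, p i * (u i t * u j t * w t * p j) ∂μ := by
          congr 1 with t
          rw [sq, Finset.sum_mul_sum]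
          simp only [Finset.sum_mul]
          exact Finset.sum_congr rfl fun i _ => Finset.sum_congr rfl fun j _ => by ring
      _ = star p ⬝ᵥ ((Matrix.of fun i j => ∫ t, u i t * u j t * w t ∂μ) *ᵥ p) := by
          simp only [dotProduct, mulVec, of_apply, star_trivial, Pi.star_apply]
          rw [integral_finsetSum _ fun i _ => integrable_finsetSum _ fun j _ =>
            ((hint i j).mul_const (p j)).const_mul (p i)]
          refine Finset.sum_congr rfl fun i _ => ?_
          rw [integral_finsetSum _ fun j _ => ((hint i j).mul_const (p j)).const_mul (p i),
            Finset.mul_sum]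
          simp only [integral_const_mul, integral_mul_const]

theorem Matrix.PosSemidef.sum_sum_mul_mul_nonneg {ι : Type*} [Fintype ι] {M : Matrix ι ι ℝ}
    (hM : M.PosSemidef) (p : ι → ℝ) : 0 ≤ ∑ i, ∑ j, p i * p j * M i j := by
  refine (hM.dotProduct_mulVec_nonneg p).trans_eq ?_
  simp only [dotProduct, mulVec, star_trivial, Pi.star_apply, Finset.mul_sum]
  exact Finset.sum_congr rfl fun i _ => Finset.sum_congr rfl fun j _ => by ring

/-- for integers `S ≥ 1`, `k ≥ 0` and real `x ∈ [0,1]`, the Hankel matrix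
with entries `x^{i+j}(i+j)!/(S+i+j)! − x^{i+j+1}(i+j+1)!/(S+i+j+1)!` is positive
semidefinite: `Σ_{i,j} p_i p_j [ … ] ≥ 0` for every `p ∈ ℝ^{k+1}`. -/
theorem hankel_difference_posSemidef
    (S k : ℕ) (hS : 1 ≤ S) (x : ℝ) (hx : x ∈ Set.Icc (0 : ℝ) 1) :
    (Matrix.of (fun i j : Fin (k + 1) =>
        x ^ ((i : ℕ) + (j : ℕ)) * ((Nat.factorial ((i : ℕ) + (j : ℕ)) : ℝ) /
            (Nat.factorial (S + (i : ℕ) + (j : ℕ)) : ℝ)) -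
          x ^ ((i : ℕ) + (j : ℕ) + 1) * ((Nat.factorial ((i : ℕ) + (j : ℕ) + 1) : ℝ) /
            (Nat.factorial (S + (i : ℕ) + (j : ℕ) + 1) : ℝ)))).PosSemidef ∧
    ∀ p : Fin (k + 1) → ℝ,
      0 ≤ ∑ i : Fin (k + 1), ∑ j : Fin (k + 1), p i * p j *
        (x ^ ((i : ℕ) + (j : ℕ)) * ((Nat.factorial ((i : ℕ) + (j : ℕ)) : ℝ) /
            (Nat.factorial (S + (i : ℕ) + (j : ℕ)) : ℝ)) -
          x ^ ((i : ℕ) + (j : ℕ) + 1) * ((Nat.factorial ((i : ℕ) + (j : ℕ) + 1) : ℝ) /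
            (Nat.factorial (S + (i : ℕ) + (j : ℕ) + 1) : ℝ))) := by
  obtain ⟨s, rfl⟩ : ∃ s, S = s + 1 := ⟨S - 1, by omega⟩
  have hw : 0 ≤ᵐ[volume.restrict (Set.Ioc 0 1)] fun t : ℝ => (1 - x * t) * (1 - t) ^ s / s ! :=
    (ae_restrict_mem measurableSet_Ioc).mono fun t ht => by
      have hxt : x * t ≤ 1 := by nlinarith [hx.1, hx.2, ht.1, ht.2]
      have ht1 : 0 ≤ 1 - t := by linarith [ht.2]
      positivity
  have hint (i j : Fin (k + 1)) : Integrable (fun t : ℝ =>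
      (x * t) ^ (i : ℕ) * (x * t) ^ (j : ℕ) * ((1 - x * t) * (1 - t) ^ s / s !))
      (volume.restrict (Set.Ioc 0 1)) :=
    (by fun_prop : Continuous _).integrableOn_Icc.mono_set Set.Ioc_subset_Icc_self
  have hM := Matrix.posSemidef_of_integral_mul_mul hw hint
  simp only [← pow_add, ← intervalIntegral.integral_of_le zero_le_one,
    integral_mul_pow_mul_one_sub_mul_mul_one_sub_pow, ← add_assoc] at hM
  exact ⟨hM, hM.sum_sum_mul_mul_nonneg⟩
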